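/- Let p ≥ 4 be an integer and 1 ≤ a ≤ p−2. For every integer L ≥ 1 and every real q with 0 < q < 1, B̃^p_{a,2}(L,4) = q^{L−1} B̃^p_{a,2}(L−1,4) + q^{a−2} B^p_{a,1}(L−1,2) + B^p_{a,3}(L−1,4). -/
import Mathlib

open Finset

noncomputable section

/-- `(q)_k = ∏_{j=1}^k (1 - q^j)`. -/
def qPoch (q : ℝ) (k : ℕ) : ℝ := ∏ j ∈ Finset.range k, (1 - q ^ (j + 1))

/-- The Andrews–Baxter `q`-trinomial coefficient `T^n(L,A)`. -/
def qTri (q : ℝ) (n : ℤ) (L : ℕ) (A : ℤ) : ℝ :=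
  if |A| ≤ (L : ℤ) then
    ∑ j ∈ Finset.range (L + 1),
      if 0 ≤ (j : ℤ) + A ∧ 0 ≤ (L : ℤ) - 2 * j - A then
        q ^ ((j : ℤ) * ((j : ℤ) + A - n)) * qPoch q L /
          (qPoch q j * qPoch q (((j : ℤ) + A).toNat) * qPoch q (((L : ℤ) - 2 * j - A).toNat))
      else 0
  else 0

/-- Bosonic polynomial `B^p_{a,b}(L,s)`. -/
def Bpoly (q : ℝ) (p a b s : ℤ) (L : ℕ) : ℝ :=
  ∑' j : ℤ,
    (q ^ (p * (p + 1) * j ^ 2 + j * ((p + 1) * a - p * s)) * qTri q 0 L (2 * p * j + a - b)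
      - q ^ ((p * j + a) * ((p + 1) * j + s)) * qTri q 0 L (2 * p * j + a + b))

/-- Bosonic polynomial `B̃^p_{a,b}(L,s)`. -/
def Btpoly (q : ℝ) (p a b s : ℤ) (L : ℕ) : ℝ :=
  ∑' j : ℤ,
    (q ^ (p * (p + 1) * j ^ 2 + j * ((p + 1) * a - p * s)) * qTri q 1 L (2 * p * j + a - b)
      - q ^ (p * (p + 1) * j ^ 2 + j * ((p + 1) * a + p * (s - 2)) + a * (s - 1) - b)
        * qTri q 1 L (2 * p * j + a + b))

section Aux

lemma qPoch_pos {q : ℝ} (hq0 : 0 < q) (hq1 : q < 1) (k : ℕ) : 0 < qPoch q k := by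
  apply Finset.prod_pos
  intro i _
  have : q ^ (i + 1) < 1 := pow_lt_one₀ hq0.le hq1 (Nat.succ_ne_zero i)
  linarith

lemma qPoch_ne_zero {q : ℝ} (hq0 : 0 < q) (hq1 : q < 1) (k : ℕ) : qPoch q k ≠ 0 :=
  (qPoch_pos hq0 hq1 k).ne'

lemma qPoch_succ (q : ℝ) (k : ℕ) : qPoch q (k + 1) = qPoch q k * (1 - q ^ (k + 1)) :=
  Finset.prod_range_succ _ _

lemma qPoch_toNat_step (q : ℝ) {c : ℤ} (hc : 1 ≤ c) :
    qPoch q c.toNat = qPoch q (c - 1).toNat * (1 - q ^ c) := by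
  have h1 : c.toNat = (c - 1).toNat + 1 := by omega
  rw [h1, qPoch_succ]
  congr 2
  rw [← zpow_natCast q ((c-1).toNat + 1)]
  congr 1
  omega

lemma one_sub_zpow_ne {q : ℝ} (hq0 : 0 < q) (hq1 : q < 1) {d : ℤ} (hd : 1 ≤ d) :
    1 - q ^ d ≠ 0 := by
  have h1 : q ^ d = q ^ d.toNat := by
    rw [← zpow_natCast]; congr 1; omega
  have : q ^ d.toNat < 1 := pow_lt_one₀ hq0.le hq1 (by omega)
  rw [h1]; linarith

lemma hdiv (a b s : ℝ) (hb : b ≠ 0) (hs : s ≠ 0) : a / b = s * (a / (b * s)) := by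
  field_simp

def qTriTerm (q : ℝ) (n : ℤ) (L : ℕ) (A : ℤ) (j : ℕ) : ℝ :=
  if 0 ≤ (j : ℤ) + A ∧ 0 ≤ (L : ℤ) - 2 * j - A then
    q ^ ((j : ℤ) * ((j : ℤ) + A - n)) * qPoch q L /
      (qPoch q j * qPoch q (((j : ℤ) + A).toNat) * qPoch q (((L : ℤ) - 2 * j - A).toNat))
  else 0

lemma qTri_eq_sum (q : ℝ) (n : ℤ) (L : ℕ) (A : ℤ) :
    qTri q n L A = ∑ j ∈ Finset.range (L + 1), qTriTerm q n L A j := by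
  unfold qTri qTriTerm
  split
  · rfl
  · next h =>
    symm
    apply Finset.sum_eq_zero
    intro j hj
    have hj' : j ≤ L := by
      have := Finset.mem_range.mp hj; omega
    rw [if_neg]
    rintro ⟨h1, h2⟩
    have h3 : A < -(L:ℤ) ∨ (L:ℤ) < A := by
      rcases lt_or_ge A 0 with hA | hA
      · left
        by_contra hc
        push_neg at hc
        exact h (abs_le.mpr ⟨hc, by omega⟩)
      · right
        by_contra hc
        push_neg at hc
        exact h (abs_le.mpr ⟨by omega, hc⟩)
    have hjL : (j:ℤ) ≤ (L:ℤ) := by exact_mod_cast hj'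
    omega

def Wf (q : ℝ) (M : ℕ) (A : ℤ) (j : ℕ) : ℝ :=
  if 0 ≤ (j : ℤ) + A ∧ 0 ≤ (M : ℤ) + 1 - 2 * j - A then
    q ^ ((j : ℤ) * ((j : ℤ) + A - 1)) * qPoch q M /
      (qPoch q j * qPoch q (((j : ℤ) + A).toNat) * qPoch q (((M : ℤ) + 1 - 2 * j - A).toNat))
  else 0

variable {q : ℝ} (hq0 : 0 < q) (hq1 : q < 1) (M : ℕ) (A : ℤ) (j : ℕ)

include hq0 hq1

lemma L1 : qTriTerm q 1 (M + 1) A j = (1 - q ^ ((M : ℤ) + 1)) * Wf q M A j := by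
  unfold qTriTerm Wf
  have hc : ((M + 1 : ℕ) : ℤ) = (M : ℤ) + 1 := by push_cast; ring
  simp only [hc]
  split
  · rw [show qPoch q (M + 1) = qPoch q M * (1 - q ^ (M + 1)) from qPoch_succ q M]
    rw [show q ^ ((M : ℤ) + 1) = q ^ (M + 1) by rw [← zpow_natCast]; norm_num]
    ring
  · ring

lemma L2 : qTriTerm q 1 M A j = (1 - q ^ ((M : ℤ) + 1 - 2 * j - A)) * Wf q M A j := by
  unfold qTriTerm Wf
  split
  · next hT =>
    rw [if_pos ⟨hT.1, by omega⟩]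
    have hd : (1:ℤ) ≤ (M : ℤ) + 1 - 2 * j - A := by omega
    rw [show ((M:ℤ) + 1 - 2 * j - A).toNat = (((M:ℤ) + 1 - 2 * j - A - 1)).toNat + 1 from by omega]
    rw [qPoch_succ]
    rw [show ((M:ℤ) - 2 * j - A).toNat = ((M:ℤ) + 1 - 2 * j - A - 1).toNat from by omega]
    rw [show q ^ ((((M:ℤ) + 1 - 2 * j - A - 1).toNat) + 1) = q ^ ((M:ℤ) + 1 - 2 * j - A) from by
      rw [← zpow_natCast]; congr 1; omega]
    have h1 := qPoch_ne_zero hq0 hq1 j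
    have h2 := qPoch_ne_zero hq0 hq1 (((j:ℤ) + A).toNat)
    have h3 := qPoch_ne_zero hq0 hq1 (((M:ℤ) + 1 - 2 * j - A - 1).toNat)
    have h4 := one_sub_zpow_ne hq0 hq1 hd
    rw [show qPoch q j * qPoch q (((j:ℤ) + A).toNat) *
          (qPoch q (((M:ℤ) + 1 - 2 * j - A - 1).toNat) * (1 - q ^ ((M:ℤ) + 1 - 2 * j - A)))
        = qPoch q j * qPoch q (((j:ℤ) + A).toNat) * qPoch q (((M:ℤ) + 1 - 2 * j - A - 1).toNat)
            * (1 - q ^ ((M:ℤ) + 1 - 2 * j - A)) from by ring]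
    exact hdiv _ _ _ (by positivity) h4
  · next hT =>
    split
    · next hW =>
      have hd0 : (M:ℤ) + 1 - 2 * j - A = 0 := by omega
      rw [hd0, zpow_zero]
      ring
    · ring

lemma L3 : qTriTerm q 0 M (A - 1) j = (1 - q ^ ((j : ℤ) + A)) * Wf q M A j := by
  unfold qTriTerm Wf
  split
  · next hT =>
    rw [if_pos ⟨by omega, by omega⟩]
    have hc : (1:ℤ) ≤ (j : ℤ) + A := by omega
    rw [show ((j:ℤ) + (A-1)).toNat = ((j:ℤ) + A - 1).toNat from by omega]
    rw [show ((j:ℤ) + A).toNat = ((j:ℤ) + A - 1).toNat + 1 from by omega]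
    rw [qPoch_succ]
    rw [show ((M:ℤ) - 2 * j - (A-1)).toNat = ((M:ℤ) + 1 - 2 * j - A).toNat from by omega]
    rw [show ((j:ℤ) * ((j:ℤ) + (A-1) - 0)) = (j:ℤ) * ((j:ℤ) + A - 1) from by ring]
    rw [show q ^ ((((j:ℤ) + A - 1).toNat) + 1) = q ^ ((j:ℤ) + A) from by
      rw [← zpow_natCast]; congr 1; omega]
    have h1 := qPoch_ne_zero hq0 hq1 j
    have h3 := qPoch_ne_zero hq0 hq1 (((M:ℤ) + 1 - 2 * j - A).toNat)
    have h2 := qPoch_ne_zero hq0 hq1 (((j:ℤ) + A - 1).toNat)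
    have h4 := one_sub_zpow_ne hq0 hq1 hc
    rw [show qPoch q j * (qPoch q (((j:ℤ) + A - 1).toNat) * (1 - q ^ ((j:ℤ) + A))) *
          qPoch q (((M:ℤ) + 1 - 2 * j - A).toNat)
        = qPoch q j * qPoch q (((j:ℤ) + A - 1).toNat) * qPoch q (((M:ℤ) + 1 - 2 * j - A).toNat)
            * (1 - q ^ ((j:ℤ) + A)) from by ring]
    exact hdiv _ _ _ (by positivity) h4
  · next hT =>
    split
    · next hW =>
      have hc0 : (j:ℤ) + A = 0 := by omega
      rw [hc0, zpow_zero]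
      ring
    · ring

lemma L4 : (1 - q ^ ((j : ℤ) + 1)) * Wf q M A (j + 1) = q ^ A * qTriTerm q 0 M (A + 1) j := by
  unfold qTriTerm Wf
  have hxx : (((j+1 : ℕ)) : ℤ) = (j:ℤ) + 1 := by push_cast; ring
  simp only [hxx]
  by_cases hW : 0 ≤ (j:ℤ) + 1 + A ∧ 0 ≤ (M:ℤ) + 1 - 2 * ((j:ℤ)+1) - A
  · rw [if_pos hW, if_pos ⟨by omega, by omega⟩]
    rw [show ((j:ℤ) + 1 + A).toNat = ((j:ℤ) + (A+1)).toNat from by omega]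
    rw [show ((M:ℤ) + 1 - 2 * ((j:ℤ)+1) - A).toNat = ((M:ℤ) - 2 * j - (A+1)).toNat from by omega]
    rw [show qPoch q (j+1) = qPoch q j * (1 - q ^ (j+1)) from qPoch_succ q j]
    rw [show q ^ (((j:ℤ)+1) * ((j:ℤ) + 1 + A - 1)) = q ^ A * q ^ ((j:ℤ) * ((j:ℤ) + (A+1) - 0)) from by
      rw [← zpow_add₀ hq0.ne']; congr 1; ring]
    rw [show q ^ ((j:ℤ) + 1) = q ^ (j + 1) from by norm_cast]
    have h1 := qPoch_ne_zero hq0 hq1 j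
    have h2 := qPoch_ne_zero hq0 hq1 (((j:ℤ) + (A+1)).toNat)
    have h3 := qPoch_ne_zero hq0 hq1 (((M:ℤ) - 2 * j - (A+1)).toNat)
    have h4 : (1 : ℝ) - q ^ (j+1) ≠ 0 := by
      have : q ^ (j + 1) < 1 := pow_lt_one₀ hq0.le hq1 (Nat.succ_ne_zero j)
      linarith
    field_simp
  · have hW2 : ¬(0 ≤ (j:ℤ) + (A+1) ∧ 0 ≤ (M:ℤ) - 2 * j - (A+1)) := by omega
    rw [if_neg hW, if_neg hW2]
    ring

lemma L6 : -((1 - q ^ ((j : ℤ) + 1)) * (1 - q ^ ((j : ℤ) + 1 + A)) * Wf q M A (j + 1))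
    = -(q ^ (2 * (j:ℤ) + A) * (1 - q ^ ((M:ℤ) + 1 - 2 * j - A))
        * (1 - q ^ ((M:ℤ) - 2 * j - A)) * Wf q M A j) := by
  unfold Wf
  have hxx : (((j+1 : ℕ)) : ℤ) = (j:ℤ) + 1 := by push_cast; ring
  simp only [hxx]
  by_cases hW : 0 ≤ (j:ℤ) + A ∧ 0 ≤ (M:ℤ) + 1 - 2 * j - A
  · by_cases hW1 : 0 ≤ (j:ℤ) + 1 + A ∧ 0 ≤ (M:ℤ) + 1 - 2 * ((j:ℤ)+1) - A
    · -- main case : c ≥ 0, d ≥ 2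
      rw [if_pos hW, if_pos hW1]
      have hd2 : (2:ℤ) ≤ (M:ℤ) + 1 - 2 * j - A := by omega
      -- rewrite pochhammers
      rw [show qPoch q (j+1) = qPoch q j * (1 - q ^ (j+1)) from qPoch_succ q j]
      rw [show ((j:ℤ) + 1 + A).toNat = ((j:ℤ) + A).toNat + 1 from by omega]
      rw [qPoch_succ q (((j:ℤ) + A).toNat)]
      rw [show q ^ ((((j:ℤ) + A).toNat) + 1) = q ^ ((j:ℤ) + A + 1) from by
        rw [← zpow_natCast]; congr 1; omega]
      rw [show ((M:ℤ) + 1 - 2*((j:ℤ)+1) - A).toNat = ((M:ℤ) + 1 - 2*j - A - 2).toNat from by omega]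
      rw [show qPoch q (((M:ℤ) + 1 - 2*j - A).toNat)
          = qPoch q (((M:ℤ) + 1 - 2*j - A - 2).toNat) * (1 - q ^ ((M:ℤ) - 2*j - A))
              * (1 - q ^ ((M:ℤ) + 1 - 2*j - A)) from by
        rw [qPoch_toNat_step q (by omega : (1:ℤ) ≤ (M:ℤ) + 1 - 2*j - A)]
        rw [qPoch_toNat_step q (by omega : (1:ℤ) ≤ (M:ℤ) + 1 - 2*j - A - 1)]
        rw [show (M:ℤ) + 1 - 2*j - A - 1 - 1 = (M:ℤ) + 1 - 2*j - A - 2 from by ring]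
        rw [show (M:ℤ) + 1 - 2*j - A - 1 = (M:ℤ) - 2*j - A from by ring]]
      rw [show q ^ (((j:ℤ)+1) * ((j:ℤ) + 1 + A - 1))
          = q ^ (2*(j:ℤ) + A) * q ^ ((j:ℤ) * ((j:ℤ) + A - 1)) from by
        rw [← zpow_add₀ hq0.ne']; congr 1; ring]
      rw [show q ^ ((j:ℤ) + 1) = q ^ (j + 1) from by norm_cast]
      rw [show q ^ ((j:ℤ) + A + 1) = q ^ ((((j:ℤ) + A).toNat) + 1) from by
        rw [← zpow_natCast]; congr 1; omega]
      rw [show q ^ ((j:ℤ) + 1 + A) = q ^ ((((j:ℤ) + A).toNat) + 1) from by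
        rw [← zpow_natCast]; congr 1; omega]
      have h1 := qPoch_ne_zero hq0 hq1 j
      have h2 := qPoch_ne_zero hq0 hq1 (((j:ℤ) + A).toNat)
      have h3 := qPoch_ne_zero hq0 hq1 (((M:ℤ) + 1 - 2*j - A - 2).toNat)
      have h4 : (1 : ℝ) - q ^ (j+1) ≠ 0 := by
        have : q ^ (j + 1) < 1 := pow_lt_one₀ hq0.le hq1 (Nat.succ_ne_zero j)
        linarith
      have h5 : (1 : ℝ) - q ^ ((((j:ℤ) + A).toNat) + 1) ≠ 0 := by
        have : q ^ ((((j:ℤ) + A).toNat) + 1) < 1 := pow_lt_one₀ hq0.le hq1 (Nat.succ_ne_zero _)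
        linarith
      have h6 := one_sub_zpow_ne hq0 hq1 (by omega : (1:ℤ) ≤ (M:ℤ) - 2*j - A)
      have h7 := one_sub_zpow_ne hq0 hq1 (by omega : (1:ℤ) ≤ (M:ℤ) + 1 - 2*j - A)
      field_simp
    · -- Wf j guard true, Wf (j+1) guard false: d ≤ 1
      rw [if_pos hW, if_neg hW1]
      have hd : (M:ℤ) + 1 - 2 * j - A = 0 ∨ (M:ℤ) + 1 - 2 * j - A = 1 := by omega
      rcases hd with hd | hd
      · rw [hd, zpow_zero]; ring
      · rw [show (M:ℤ) - 2*j - A = 0 from by omega, zpow_zero, hd]; ring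
  · by_cases hW1 : 0 ≤ (j:ℤ) + 1 + A ∧ 0 ≤ (M:ℤ) + 1 - 2 * ((j:ℤ)+1) - A
    · -- Wf j guard false but Wf (j+1) true: c = -1
      rw [if_neg hW, if_pos hW1]
      rw [show (j:ℤ) + 1 + A = 0 from by omega, zpow_zero]
      ring
    · rw [if_neg hW, if_neg hW1]
      ring

omit hq0 hq1 in
lemma scalar_id (q X Y Z : ℝ) (hq : q ≠ 0) :
    (1 - X*Y*Z) = (X*Y*Z/q)*(1-Z) + (1-Y) + (1-X) - (1-X)*(1-Y) + (X*Y)*(1-Z)*(1-Z/q) := by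
  field_simp
  ring

def Gf (q : ℝ) (M : ℕ) (A : ℤ) (k : ℕ) : ℝ :=
  -((1 - q^(k:ℤ)) * (1 - q^((k:ℤ)+A)) * Wf q M A k) + (1 - q^(k:ℤ)) * Wf q M A k

lemma Fterm :
    qTriTerm q 1 (M+1) A j - q^((M:ℤ)) * qTriTerm q 1 M A j
      - q^A * qTriTerm q 0 M (A+1) j - qTriTerm q 0 M (A-1) j
    = Gf q M A j - Gf q M A (j+1) := by
  unfold Gf
  have hxx : (((j+1:ℕ)):ℤ) = (j:ℤ)+1 := by push_cast; ring
  rw [hxx]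
  rw [L1 hq0 hq1, L2 hq0 hq1, L3 hq0 hq1, ← L4 hq0 hq1, L6 hq0 hq1]
  have hq := hq0.ne'
  rw [show q^((M:ℤ)+1) = q^((j:ℤ)) * q^((j:ℤ)+A) * q^((M:ℤ)+1-2*(j:ℤ)-A) from by
    rw [← zpow_add₀ hq, ← zpow_add₀ hq]; congr 1; ring]
  rw [show q^((M:ℤ)) = q^((j:ℤ)) * q^((j:ℤ)+A) * q^((M:ℤ)+1-2*(j:ℤ)-A) / q from by
    rw [← zpow_add₀ hq, ← zpow_add₀ hq]
    rw [show ((j:ℤ) + ((j:ℤ)+A) + ((M:ℤ)+1-2*(j:ℤ)-A)) = (M:ℤ) + 1 from by ring]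
    rw [zpow_add₀ hq, zpow_one, mul_div_assoc, div_self hq, mul_one]]
  rw [show q^(2*(j:ℤ)+A) = q^((j:ℤ)) * q^((j:ℤ)+A) from by
    rw [← zpow_add₀ hq]; congr 1; ring]
  rw [show q^((M:ℤ)-2*(j:ℤ)-A) = q^((M:ℤ)+1-2*(j:ℤ)-A) / q from by
    rw [eq_div_iff hq, ← zpow_add_one₀ hq]
    congr 1
    ring]
  have key := scalar_id q (q^((j:ℤ))) (q^((j:ℤ)+A)) (q^((M:ℤ)+1-2*(j:ℤ)-A)) hq
  linear_combination (Wf q M A j) * key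

lemma qTri_eq_sum' (n : ℤ) (L : ℕ) (A' : ℤ) : True := trivial

lemma star (A : ℤ) :
    (∑ j ∈ Finset.range (M+1+1), qTriTerm q 1 (M+1) A j)
      = q^((M:ℤ)) * (∑ j ∈ Finset.range (M+1), qTriTerm q 1 M A j)
        + q^A * (∑ j ∈ Finset.range (M+1), qTriTerm q 0 M (A+1) j)
        + (∑ j ∈ Finset.range (M+1), qTriTerm q 0 M (A-1) j) := by
  have hzero : ∀ (n A' : ℤ), qTriTerm q n M A' (M+1) = 0 := by
    intro n A'
    unfold qTriTerm
    apply if_neg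
    push_cast
    omega
  have hext : ∀ (n A' : ℤ), ∑ j ∈ Finset.range (M+1), qTriTerm q n M A' j
      = ∑ j ∈ Finset.range (M+1+1), qTriTerm q n M A' j := by
    intro n A'
    symm
    rw [Finset.sum_range_succ, hzero, add_zero]
  rw [hext 1 A, hext 0 (A+1), hext 0 (A-1)]
  rw [Finset.mul_sum, Finset.mul_sum, ← Finset.sum_add_distrib, ← Finset.sum_add_distrib]
  rw [← sub_eq_zero, ← Finset.sum_sub_distrib]
  have hcong : ∀ j ∈ Finset.range (M+1+1),
      qTriTerm q 1 (M+1) A j - (q^((M:ℤ)) * qTriTerm q 1 M A j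
        + q^A * qTriTerm q 0 M (A+1) j + qTriTerm q 0 M (A-1) j)
      = Gf q M A j - Gf q M A (j+1) := by
    intro j _
    have h := Fterm hq0 hq1 M A j
    linarith
  rw [Finset.sum_congr rfl hcong, Finset.sum_range_sub']
  have hG0 : Gf q M A 0 = 0 := by
    unfold Gf
    norm_num
  have hGend : Gf q M A (M+1+1) = 0 := by
    unfold Gf
    have hW : Wf q M A (M+1+1) = 0 := by
      unfold Wf
      apply if_neg
      push_cast
      omega
    rw [hW]
    ring
  rw [hG0, hGend, sub_zero]

lemma qTri_star (A : ℤ) :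
    qTri q 1 (M+1) A
      = q^((M:ℤ)) * qTri q 1 M A + q^A * qTri q 0 M (A+1) + qTri q 0 M (A-1) := by
  rw [qTri_eq_sum, qTri_eq_sum, qTri_eq_sum, qTri_eq_sum]
  exact star hq0 hq1 M A

omit hq0 hq1 in
lemma qTri_zero_of_big {n : ℤ} {L' : ℕ} {A : ℤ} (h : (L':ℤ) < |A|) : qTri q n L' A = 0 := by
  unfold qTri
  rw [if_neg (not_le.mpr h)]

end Aux

lemma abs_arg_big {p a e j K : ℤ} (hp : 4 ≤ p) (he : |e| ≤ |a| + 3)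
    (hK : 0 ≤ K) (hj : K + |a| + 4 < |j|) : K < |2*p*j + e| := by
  have h1 : |2*p*j| ≤ |2*p*j + e| + |e| := by
    calc |2*p*j| = |(2*p*j + e) + (-e)| := by ring_nf
    _ ≤ |2*p*j + e| + |(-e)| := abs_add_le _ _
    _ = |2*p*j + e| + |e| := by rw [abs_neg]
  have h2 : |2*p*j| = 2*p*|j| := by
    rw [abs_mul, abs_of_pos (by linarith : (0:ℤ) < 2*p)]
  nlinarith [abs_nonneg j, abs_nonneg a, abs_nonneg e, abs_nonneg (2*p*j+e),
    mul_nonneg (by linarith : (0:ℤ) ≤ p - 4) (abs_nonneg j)]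

/-- For integers `p ≥ 4`, `1 ≤ a ≤ p-2`, every `L ≥ 1` and `0 < q < 1`:
`B̃^p_{a,2}(L,4) = q^{L-1} B̃^p_{a,2}(L-1,4) + q^{a-2} B^p_{a,1}(L-1,2) + B^p_{a,3}(L-1,4)`. -/
theorem Btpoly_recurrence_a2_s4 (p a : ℤ) (hp : 4 ≤ p) (ha1 : 1 ≤ a) (ha2 : a ≤ p - 2)
    (L : ℕ) (hL : 1 ≤ L) (q : ℝ) (hq0 : 0 < q) (hq1 : q < 1) :
    Btpoly q p a 2 4 L
      = q ^ ((L : ℤ) - 1) * Btpoly q p a 2 4 (L - 1)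
        + q ^ (a - 2) * Bpoly q p a 1 2 (L - 1) + Bpoly q p a 3 4 (L - 1) := by
  obtain ⟨M, rfl⟩ : ∃ M, L = M + 1 := ⟨L - 1, by omega⟩
  have hq := hq0.ne'
  simp only [Nat.add_sub_cancel]
  rw [show ((M+1:ℕ):ℤ) - 1 = (M:ℤ) by push_cast; ring]
  set B : ℤ := (M:ℤ) + (a.natAbs:ℤ) + 9 with hB
  set S : Finset ℤ := Finset.Icc (-B) B with hS
  have hvan : ∀ (n : ℤ) (L' : ℕ), L' ≤ M+1 → ∀ (e : ℤ), |e| ≤ |a|+3 → ∀ j : ℤ, j ∉ S →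
      qTri q n L' (2*p*j+e) = 0 := by
    intro n L' hL' e he j hj
    apply qTri_zero_of_big
    have hj' : B < |j| := by
      simp only [hS, Finset.mem_Icc, not_and_or, not_le] at hj
      rcases hj with h | h
      · rw [abs_of_neg (by omega)]; omega
      · rw [abs_of_pos (by omega)]; omega
    have hna : ((a.natAbs:ℤ)) = |a| := (Int.abs_eq_natAbs a).symm
    have hL'' : (L':ℤ) ≤ (M:ℤ) + 1 := by exact_mod_cast hL'
    exact abs_arg_big hp he (by positivity) (by omega)
  have hea : |a - 2| ≤ |a| + 3 := by
    have := abs_sub a 2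
    simp only [abs_two] at this
    linarith
  have heb : |a + 2| ≤ |a| + 3 := by
    have := abs_add_le a 2
    simp only [abs_two] at this
    linarith
  have hec : |a - 1| ≤ |a| + 3 := by
    have := abs_sub a 1
    simp only [abs_one] at this
    linarith
  have hed : |a + 1| ≤ |a| + 3 := by
    have := abs_add_le a 1
    simp only [abs_one] at this
    linarith
  have hee : |a - 3| ≤ |a| + 3 := by
    have := abs_sub a 3
    rw [show |(3:ℤ)| = 3 from by norm_num] at this
    linarith
  have hef : |a + 3| ≤ |a| + 3 := by
    have := abs_add_le a 3
    rw [show |(3:ℤ)| = 3 from by norm_num] at this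
    linarith
  unfold Btpoly Bpoly
  rw [tsum_eq_sum (s := S) (f := fun j : ℤ =>
      (q ^ (p * (p + 1) * j ^ 2 + j * ((p + 1) * a - p * 4)) * qTri q 1 (M+1) (2 * p * j + a - 2)
      - q ^ (p * (p + 1) * j ^ 2 + j * ((p + 1) * a + p * (4 - 2)) + a * (4 - 1) - 2)
        * qTri q 1 (M+1) (2 * p * j + a + 2))) ?_]
  rw [tsum_eq_sum (s := S) (f := fun j : ℤ =>
      (q ^ (p * (p + 1) * j ^ 2 + j * ((p + 1) * a - p * 4)) * qTri q 1 M (2 * p * j + a - 2)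
      - q ^ (p * (p + 1) * j ^ 2 + j * ((p + 1) * a + p * (4 - 2)) + a * (4 - 1) - 2)
        * qTri q 1 M (2 * p * j + a + 2))) ?_]
  rw [tsum_eq_sum (s := S) (f := fun j : ℤ =>
      (q ^ (p * (p + 1) * j ^ 2 + j * ((p + 1) * a - p * 2)) * qTri q 0 M (2 * p * j + a - 1)
      - q ^ ((p * j + a) * ((p + 1) * j + 2)) * qTri q 0 M (2 * p * j + a + 1))) ?_]
  rw [tsum_eq_sum (s := S) (f := fun j : ℤ =>
      (q ^ (p * (p + 1) * j ^ 2 + j * ((p + 1) * a - p * 4)) * qTri q 0 M (2 * p * j + a - 3)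
      - q ^ ((p * j + a) * ((p + 1) * j + 4)) * qTri q 0 M (2 * p * j + a + 3))) ?_]
  · rw [Finset.mul_sum, Finset.mul_sum, ← Finset.sum_add_distrib, ← Finset.sum_add_distrib]
    refine Finset.sum_congr rfl (fun j _ => ?_)
    have e1 := qTri_star hq0 hq1 M (2*p*j + a - 2)
    have e2 := qTri_star hq0 hq1 M (2*p*j + a + 2)
    rw [show 2*p*j+a-2+1 = 2*p*j+a-1 from by ring,
        show 2*p*j+a-2-1 = 2*p*j+a-3 from by ring] at e1
    rw [show 2*p*j+a+2+1 = 2*p*j+a+3 from by ring,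
        show 2*p*j+a+2-1 = 2*p*j+a+1 from by ring] at e2
    rw [e1, e2]
    have c1 : q^(p * (p + 1) * j ^ 2 + j * ((p + 1) * a - p * 4)) * q^(2*p*j + a - 2)
        = q^(a-2) * q^(p * (p + 1) * j ^ 2 + j * ((p + 1) * a - p * 2)) := by
      rw [← zpow_add₀ hq, ← zpow_add₀ hq]; congr 1; ring
    have c3 : q^(p * (p + 1) * j ^ 2 + j * ((p + 1) * a + p * (4 - 2)) + a * (4 - 1) - 2)
          * q^(2*p*j + a + 2)
        = q^((p * j + a) * ((p + 1) * j + 4)) := by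
      rw [← zpow_add₀ hq]; congr 1; ring
    have c4 : q^(p * (p + 1) * j ^ 2 + j * ((p + 1) * a + p * (4 - 2)) + a * (4 - 1) - 2)
        = q^(a-2) * q^((p * j + a) * ((p + 1) * j + 2)) := by
      rw [← zpow_add₀ hq]; congr 1; ring
    linear_combination (qTri q 0 M (2*p*j+a-1)) * c1 - (qTri q 0 M (2*p*j+a+3)) * c3
      - (qTri q 0 M (2*p*j+a+1)) * c4
  · intro j hj
    beta_reduce
    rw [show 2*p*j+a-3 = 2*p*j+(a-3) from by ring, show 2*p*j+a+3 = 2*p*j+(a+3) from by ring,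
      hvan 0 M (by omega) (a-3) hee j hj, hvan 0 M (by omega) (a+3) hef j hj]
    ring
  · intro j hj
    beta_reduce
    rw [show 2*p*j+a-1 = 2*p*j+(a-1) from by ring, show 2*p*j+a+1 = 2*p*j+(a+1) from by ring,
      hvan 0 M (by omega) (a-1) hec j hj, hvan 0 M (by omega) (a+1) hed j hj]
    ring
  · intro j hj
    beta_reduce
    rw [show 2*p*j+a-2 = 2*p*j+(a-2) from by ring, show 2*p*j+a+2 = 2*p*j+(a+2) from by ring,
      hvan 1 M (by omega) (a-2) hea j hj, hvan 1 M (by omega) (a+2) heb j hj]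
    ring
  · intro j hj
    beta_reduce
    rw [show 2*p*j+a-2 = 2*p*j+(a-2) from by ring, show 2*p*j+a+2 = 2*p*j+(a+2) from by ring,
      hvan 1 (M+1) (by omega) (a-2) hea j hj, hvan 1 (M+1) (by omega) (a+2) heb j hj]
    ring
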